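/- arXiv:math/0310188 — 5 statements merged into one kernel-verified Lean document; each statement's English description precedes it below -/
import Mathlib

section
/- For every positive integer n, the map \Phi is a bijection from DPP(n) onto L(n), the set of nonintersecting lattice-path families whose i-th path runs from (0, h_i) to (h_i - 2, 0) for some integers n \ge h_1 > h_2 > … > h_k \ge 2. -/
/-!
Pad row `i` of a DPP with zeros to length `π_{i,i} - 1`. The padded row `a :: H` lists the
start height `a` of the path `P_i` followed by the heights of all its east steps, so in column
`j` the path occupies exactly the heights from `H_j` up to `(a :: H)_j`. Two such paths starting
at heights `b < a` are disjoint iff the lower one stays strictly below the upper one in every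
column, and for the padded rows of two consecutive DPP rows this is exactly column-strictness
together with the shape condition and the bound on the first entry of the lower row. Being
strictly below is transitive, so disjointness of consecutive paths already gives a
nonintersecting family. Conversely, a path from `(0, a)` to `(a - 2, 0)` is determined by the
heights of its east steps, and dropping their trailing zeros recovers the DPP row.
-/

/-- The entry of the array at row `r` (0-indexed) and position `p` within that row
(this is the entry in column `r + p`, 0-indexed, i.e. `π_{r+1, r+p+1}` in 1-indexed terms). -/
def entry? (rows : List (List ℕ)) (r p : ℕ) : Option ℕ :=
  rows[r]?.bind fun row => row[p]?

/-- `rows` is a `d`-descending plane partition with all entries ≤ `n`.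
Row `i` (1-indexed) has `λ_i - i + 1` entries, so `λ_i = (length of row i) + i - 1`;
the condition `λ_1 ≥ λ_2 ≥ ⋯ ≥ λ_k ≥ k` is equivalent to the row lengths being
strictly decreasing and all rows being nonempty. -/
def IsDPP (d : ℤ) (n : ℕ) (rows : List (List ℕ)) : Prop :=
  -- all rows nonempty (this is `λ_k ≥ k` for each row)
  (∀ row ∈ rows, row ≠ []) ∧
  -- entries are positive integers, at most n
  (∀ row ∈ rows, ∀ x ∈ row, 0 < x ∧ x ≤ n) ∧
  -- shape condition `λ_1 ≥ λ_2 ≥ ⋯`: row lengths strictly decrease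
  rows.Chain' (fun a b => b.length < a.length) ∧
  -- entries weakly decrease along each row
  (∀ row ∈ rows, row.Chain' (fun x y => y ≤ x)) ∧
  -- entries strictly decrease down each column: the entry at position `p` of a row is in
  -- the same column as the entry at position `p+1` of the preceding row
  rows.Chain' (fun a b => ∀ p x y, b[p]? = some x → a[p + 1]? = some y → x < y) ∧
  -- the first entry of each row is strictly greater than (number of entries in the row) - d
  (∀ row ∈ rows, ∀ x, row.head? = some x → (row.length : ℤ) - d < (x : ℤ)) ∧
  -- the first entry of each non-first row is at most (number of entries in previous row) - d
  rows.Chain' (fun a b => ∀ x, b.head? = some x → (x : ℤ) ≤ (a.length : ℤ) - d)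

/-- The entrywise order on descending plane partitions: `π ≤ σ` iff whenever an
entry of `π` exists, the corresponding entry of `σ` exists and is at least as large. -/
def dppLe (π σ : List (List ℕ)) : Prop :=
  ∀ r p x, entry? π r p = some x → ∃ y, entry? σ r p = some y ∧ x ≤ y

/-- `i(π)`: the total number of entries. -/
def numEntries (rows : List (List ℕ)) : ℕ := (rows.map List.length).sum

/-- `r(π)` (for the bound `n`): the number of entries equal to `n`. -/
def numEqual (n : ℕ) (rows : List (List ℕ)) : ℕ :=
  (rows.map fun row => row.count n).sum

/-- `s(π)`: the number of special entries, i.e. entries `π_{i,j}` with `π_{i,j} ≤ j - i`;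
in 0-indexed terms, the entry at position `p` of a row is special iff it is `≤ p`. -/
def numSpecial (rows : List (List ℕ)) : ℕ :=
  (rows.map fun row =>
    ((Finset.range row.length).filter fun p => row.getD p 0 ≤ p).card).sum

/-- A lattice path, given by its starting point and its list of steps:
`true` is an east step `(1,0)`, `false` is a south step `(0,-1)`. -/
structure LPath where
  start : ℤ × ℤ
  steps : List Bool

/-- The displacement vector of a step. -/
def stepVec (b : Bool) : ℤ × ℤ := if b then (1, 0) else (0, -1)

/-- The list of lattice points visited by a path. -/
def LPath.points (P : LPath) : List (ℤ × ℤ) :=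
  P.steps.scanl (fun p b => p + stepVec b) P.start

/-- The endpoint of a path. -/
def LPath.finish (P : LPath) : ℤ × ℤ :=
  P.steps.foldl (fun p b => p + stepVec b) P.start

/-- The starting points of the east steps of a path (an east step starting at `(x,y)`
has height `y` and right endpoint `(x+1, y)`). -/
def LPath.eastSteps (P : LPath) : List (ℤ × ℤ) :=
  ((P.points.zip P.steps).filter fun q => q.2).map Prod.fst

/-- A family of lattice paths is nonintersecting if no two paths share a lattice point. -/
def Nonintersecting (F : List LPath) : Prop :=
  F.Pairwise fun P Q => ∀ pt ∈ P.points, pt ∉ Q.points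

/-- `L(n)`: families `(P_1, …, P_k)` of pairwise nonintersecting lattice paths such that
for some `n ≥ h_1 > h_2 > ⋯ > h_k ≥ 2`, the path `P_i` runs from `(0, h_i)` to `(h_i - 2, 0)`. -/
def InL (n : ℕ) (F : List LPath) : Prop :=
  (∀ P ∈ F, ∃ h : ℤ, 2 ≤ h ∧ h ≤ (n : ℤ) ∧ P.start = (0, h) ∧ P.finish = (h - 2, 0)) ∧
  F.Chain' (fun P Q => Q.start.2 < P.start.2) ∧
  Nonintersecting F

/-- The steps of a path that starts at height `top` and takes its east steps at the
heights listed in `H` (weakly decreasing), ending at height `0`. -/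
def stepsFromHeights : ℕ → List ℕ → List Bool
  | top, [] => List.replicate top false
  | top, h :: t => List.replicate (top - h) false ++ true :: stepsFromHeights h t

/-- The path associated to a row `π_{i,i}, π_{i,i+1}, …, π_{i,λ_i}` of a descending plane
partition: it starts at `(0, π_{i,i})`, takes its east steps at the heights
`π_{i,i+1}, …, π_{i,λ_i}` in this order, then takes `π_{i,i} - 2 - (λ_i - i)` further east
steps at height `0`, ending at `(π_{i,i} - 2, 0)`. -/
def phiRow (row : List ℕ) : LPath :=
  match row with
  | [] => ⟨(0, 0), []⟩
  | a :: rest =>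
      ⟨((0 : ℤ), (a : ℤ)), stepsFromHeights a (rest ++ List.replicate (a - 2 - rest.length) 0)⟩

/-- The map `Φ` from descending plane partitions to families of lattice paths. -/
def Phi (rows : List (List ℕ)) : List LPath := rows.map phiRow

theorem List.isChain_and {α : Type*} {R S : α → α → Prop} {l : List α} :
    l.IsChain (fun a b => R a b ∧ S a b) ↔ l.IsChain R ∧ l.IsChain S := by
  simp only [List.isChain_iff_getElem, ← forall_and]

theorem List.invOn_map {α β : Type*} {f : α → β} {g : β → α} {s : Set α} {t : Set β}
    (h : Set.InvOn g f s t) :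
    Set.InvOn (List.map g) (List.map f) {l | ∀ x ∈ l, x ∈ s} {l | ∀ y ∈ l, y ∈ t} :=
  ⟨fun l hl => (List.map_map ..).trans <|
      (List.map_congr_left fun x hx => h.1 (hl x hx)).trans l.map_id,
    fun l hl => (List.map_map ..).trans <|
      (List.map_congr_left fun y hy => h.2 (hl y hy)).trans l.map_id⟩

theorem List.mapsTo_map {α β : Type*} {f : α → β} {s : Set α} {t : Set β}
    {R : α → α → Prop} {S : β → β → Prop} (hf : Set.MapsTo f s t)
    (hRS : ∀ x ∈ s, ∀ y ∈ s, R x y → S (f x) (f y)) :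
    Set.MapsTo (List.map f) {l | (∀ x ∈ l, x ∈ s) ∧ l.IsChain R}
      {l | (∀ y ∈ l, y ∈ t) ∧ l.IsChain S} := fun _ ⟨hl, hR⟩ =>
  ⟨List.forall_mem_map.2 fun x hx => hf (hl x hx),
    (List.isChain_map f).2 (hR.imp_of_mem_imp fun x y hx hy => hRS x (hl x hx) y (hl y hy))⟩

theorem List.bijOn_map {α β : Type*} {f : α → β} {g : β → α} {s : Set α} {t : Set β}
    {R : α → α → Prop} {S : β → β → Prop} (hinv : Set.InvOn g f s t) (hf : Set.MapsTo f s t)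
    (hg : Set.MapsTo g t s) (hRS : ∀ x ∈ s, ∀ y ∈ s, R x y ↔ S (f x) (f y)) :
    Set.BijOn (List.map f) {l | (∀ x ∈ l, x ∈ s) ∧ l.IsChain R}
      {l | (∀ y ∈ l, y ∈ t) ∧ l.IsChain S} := by
  refine ((List.invOn_map hinv).mono (fun l hl => hl.1) fun l hl => hl.1).bijOn
    (List.mapsTo_map hf fun x hx y hy => (hRS x hx y hy).1)
    (List.mapsTo_map hg fun u hu v hv huv => (hRS _ (hg hu) _ (hg hv)).2 ?_)
  rwa [hinv.2 hu, hinv.2 hv]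

theorem List.antitone_getD {l : List ℕ} (hl : l.IsChain (· ≥ ·)) : Antitone (l.getD · 0) := by
  refine antitone_nat_of_succ_le fun i => ?_
  by_cases hi : i + 1 < l.length
  · rw [List.getD_eq_getElem _ _ hi, List.getD_eq_getElem _ _ (by omega)]
    exact List.isChain_iff_getElem.1 hl i hi
  · rw [List.getD_eq_default _ _ (by omega)]
    exact Nat.zero_le _

namespace LPath

theorem points_cons (q : ℤ × ℤ) (b : Bool) (s : List Bool) :
    points ⟨q, b :: s⟩ = q :: points ⟨q + stepVec b, s⟩ := by
  simp [points, List.scanl_cons]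

theorem finish_eq (x y : ℤ) (s : List Bool) :
    finish ⟨(x, y), s⟩ = (x + s.count true, y - s.count false) := by
  induction s generalizing x y with
  | nil => simp [finish]
  | cons b s ih =>
    rw [show finish ⟨(x, y), b :: s⟩ = finish ⟨(x, y) + stepVec b, s⟩ from rfl]
    cases b <;>
      simp only [stepVec, Bool.false_eq_true, if_true, if_false, Prod.mk_add_mk, ih,
        List.count_cons_self, List.count_cons_of_ne, ne_eq, not_false_eq_true, Bool.true_eq_false,
        Nat.cast_add, Nat.cast_one, Prod.mk.injEq] <;>
      constructor <;> ring

theorem mem_points_replicate_false_append (k : ℕ) (x y : ℤ) (s : List Bool) (q : ℤ × ℤ) :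
    q ∈ points ⟨(x, y), List.replicate k false ++ s⟩ ↔
      (q.1 = x ∧ y - k < q.2 ∧ q.2 ≤ y) ∨ q ∈ points ⟨(x, y - k), s⟩ := by
  induction k generalizing y with
  | zero => simp
  | succ k ih =>
    rw [List.replicate_succ, List.cons_append, points_cons, List.mem_cons]
    simp only [stepVec, Prod.mk_add_mk, Bool.false_eq_true, if_false, add_zero]
    rw [ih, show y + -1 - k = y - (k + 1 : ℕ) by push_cast; ring]
    obtain ⟨u, v⟩ := q
    simp only [Prod.mk.injEq]
    constructor
    · rintro (⟨rfl, rfl⟩ | ⟨rfl, h⟩ | h) <;> [left; left; right] <;> grind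
    · rintro (⟨rfl, h⟩ | h) <;> grind

theorem mem_points_stepsFromHeights {top : ℕ} {H : List ℕ} (hH : (top :: H).IsChain (· ≥ ·))
    (x₀ : ℤ) (q : ℤ × ℤ) :
    q ∈ points ⟨(x₀, top), stepsFromHeights top H⟩ ↔
      ∃ j ≤ H.length, q.1 = x₀ + j ∧ H.getD j 0 ≤ q.2 ∧ q.2 ≤ (top :: H).getD j 0 := by
  induction H generalizing top x₀ with
  | nil =>
    rw [stepsFromHeights, ← List.append_nil (List.replicate _ _),
      mem_points_replicate_false_append]
    obtain ⟨u, v⟩ := q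
    simp only [sub_self, points, List.scanl_nil, List.mem_singleton, Prod.mk.injEq,
      List.length_nil, Nat.le_zero, exists_eq_left, List.getD_nil, List.getD_cons_zero,
      Nat.cast_zero, add_zero]
    omega
  | cons h t ih =>
    obtain ⟨hht, ht⟩ := List.isChain_cons_cons.1 hH
    rw [stepsFromHeights, mem_points_replicate_false_append, Nat.cast_sub hht, sub_sub_cancel,
      points_cons, List.mem_cons]
    simp only [stepVec, if_true, Prod.mk_add_mk, add_zero]
    rw [ih ht]
    obtain ⟨u, v⟩ := q
    simp only [Prod.mk.injEq, List.length_cons]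
    constructor
    · rintro (⟨rfl, h₁, h₂⟩ | ⟨rfl, rfl⟩ | ⟨j, hj, rfl, h₁, h₂⟩)
      · exact ⟨0, by simp, by simp, by rw [List.getD_cons_zero]; omega, by simpa using h₂⟩
      · exact ⟨0, by simp, by simp, by simp, by simpa using hht⟩
      · exact ⟨j + 1, by omega, by push_cast; ring, by simpa using h₁, by simpa using h₂⟩
    · rintro ⟨_ | j, hj, rfl, h₁, h₂⟩
      · simp only [List.getD_cons_zero] at h₁ h₂
        rcases h₁.lt_or_eq with h₁ | h₁
        · exact Or.inl ⟨by simp, h₁, h₂⟩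
        · exact Or.inr (Or.inl ⟨by simp, h₁.symm⟩)
      · refine Or.inr (Or.inr ⟨j, by omega, by push_cast; ring, ?_, ?_⟩) <;>
          simpa only [List.getD_cons_succ] using ‹_›

end LPath

theorem count_true_stepsFromHeights (top : ℕ) (H : List ℕ) :
    (stepsFromHeights top H).count true = H.length := by
  induction H generalizing top with
  | nil => simp [stepsFromHeights, List.count_replicate]
  | cons h t ih => simp [stepsFromHeights, List.count_replicate, ih]

theorem count_false_stepsFromHeights {top : ℕ} {H : List ℕ} (hH : (top :: H).IsChain (· ≥ ·)) :
    (stepsFromHeights top H).count false = top := by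
  induction H generalizing top with
  | nil => simp [stepsFromHeights]
  | cons h t ih =>
    obtain ⟨hht, ht⟩ := List.isChain_cons_cons.1 hH
    rw [stepsFromHeights, List.count_append, List.count_replicate_self,
      List.count_cons_of_ne (by decide), ih ht]
    omega

theorem stepsFromHeights_succ {m : ℕ} {H : List ℕ} (hH : ∀ x ∈ H, x ≤ m) :
    stepsFromHeights (m + 1) H = false :: stepsFromHeights m H := by
  cases H with
  | nil => simp [stepsFromHeights, List.replicate_succ]
  | cons h t =>
    simp [stepsFromHeights, Nat.succ_sub (hH h List.mem_cons_self), List.replicate_succ]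

def eastHeights : ℕ → List Bool → List ℕ
  | _, [] => []
  | y, true :: s => y :: eastHeights y s
  | y, false :: s => eastHeights (y - 1) s

theorem le_of_mem_eastHeights {y x : ℕ} {s : List Bool} (hx : x ∈ eastHeights y s) : x ≤ y := by
  induction s generalizing y with
  | nil => simp [eastHeights] at hx
  | cons b s ih =>
    cases b with
    | true =>
      rcases List.mem_cons.1 hx with rfl | hx
      · exact le_rfl
      · exact ih hx
    | false => exact (ih hx).trans (Nat.sub_le y 1)

theorem isChain_eastHeights (y : ℕ) (s : List Bool) :
    (y :: eastHeights y s).IsChain (· ≥ ·) := by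
  induction s generalizing y with
  | nil => exact List.isChain_singleton y
  | cons b s ih =>
    cases b with
    | true => exact List.isChain_cons_cons.2 ⟨le_rfl, ih y⟩
    | false => exact (ih (y - 1)).imp_head fun h => show y ≥ _ from h.trans (Nat.sub_le y 1)

theorem length_eastHeights (y : ℕ) (s : List Bool) : (eastHeights y s).length = s.count true := by
  induction s generalizing y with
  | nil => rfl
  | cons b s ih => cases b <;> simp [eastHeights, ih]

theorem eastHeights_replicate_false_append (k y : ℕ) (s : List Bool) :
    eastHeights y (List.replicate k false ++ s) = eastHeights (y - k) s := by
  induction k generalizing y with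
  | zero => rfl
  | succ k ih =>
    rw [List.replicate_succ, List.cons_append, eastHeights, ih, Nat.sub_sub, add_comm 1]

theorem stepsFromHeights_eastHeights {top : ℕ} {s : List Bool} (hs : s.count false = top) :
    stepsFromHeights top (eastHeights top s) = s := by
  induction s generalizing top with
  | nil => subst hs; rfl
  | cons b s ih =>
    cases b with
    | true =>
      rw [eastHeights, stepsFromHeights, Nat.sub_self, List.replicate_zero, List.nil_append,
        ih (by simpa using hs)]
    | false =>
      obtain ⟨m, rfl⟩ : ∃ m, top = m + 1 := ⟨s.count false, by simpa using hs.symm⟩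
      rw [eastHeights, Nat.add_sub_cancel, stepsFromHeights_succ fun x => le_of_mem_eastHeights,
        ih (by simpa using hs)]

theorem eastHeights_stepsFromHeights {top : ℕ} {H : List ℕ} (hH : (top :: H).IsChain (· ≥ ·)) :
    eastHeights top (stepsFromHeights top H) = H := by
  induction H generalizing top with
  | nil =>
    rw [stepsFromHeights, ← List.append_nil (List.replicate _ _),
      eastHeights_replicate_false_append]
    rfl
  | cons h t ih =>
    obtain ⟨hht, ht⟩ := List.isChain_cons_cons.1 hH
    rw [stepsFromHeights, eastHeights_replicate_false_append, Nat.sub_sub_self hht, eastHeights,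
      ih ht]

def heightPath : List ℕ → LPath
  | [] => ⟨(0, 0), []⟩
  | a :: H => ⟨(0, a), stepsFromHeights a H⟩

/-- In column `p` the path `heightPath (a :: H)` occupies the heights from `H_p` up to
`(a :: H)_p`. So `Separated L M` says that in each of its columns the path of `M` lies strictly
below the path of `L`. -/
def Separated (L M : List ℕ) : Prop :=
  ∀ p < M.length, M.getD p 0 < L.getD (p + 1) 0

theorem Separated.trans {L M N : List ℕ} (hM : M.IsChain (· ≥ ·)) (hLM : Separated L M)
    (hMN : Separated M N) : Separated L N := by
  intro p hp
  have hNM := hMN p hp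
  have hpM : p + 1 < M.length := by
    by_contra h
    rw [List.getD_eq_default _ _ (not_lt.1 h)] at hNM
    omega
  calc N.getD p 0 < M.getD (p + 1) 0 := hNM
    _ ≤ M.getD p 0 := List.antitone_getD hM p.le_succ
    _ < L.getD (p + 1) 0 := hLM p (by omega)

theorem Separated.pairwise {Ls : List (List ℕ)} (hLs : ∀ L ∈ Ls, L.IsChain (· ≥ ·))
    (h : Ls.IsChain Separated) : Ls.Pairwise Separated := by
  let R (L M : List ℕ) : Prop := Separated L M ∧ M.IsChain (· ≥ ·)
  have : Trans R R R := ⟨fun hLM hMN => ⟨hLM.1.trans hLM.2 hMN.1, hMN.2⟩⟩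
  exact (h.imp_of_mem_imp (S := R) fun _ M _ hM hLM => ⟨hLM, hLs M hM⟩).pairwise.imp And.left

theorem Separated.head_lt {a b : ℕ} {H K : List ℕ} (hH : (a :: H).IsChain (· ≥ ·))
    (h : Separated (a :: H) (b :: K)) : b < a :=
  (h 0 (by simp)).trans_le (List.antitone_getD hH (Nat.zero_le 1))

theorem Separated.disjoint_points {a b : ℕ} {H K : List ℕ} (hH : (a :: H).IsChain (· ≥ ·))
    (hK : (b :: K).IsChain (· ≥ ·)) (h : Separated (a :: H) (b :: K)) :
    ∀ pt ∈ (heightPath (a :: H)).points, pt ∉ (heightPath (b :: K)).points := by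
  rintro ⟨u, v⟩ hP hQ
  obtain ⟨j, -, rfl, hlo, -⟩ := (LPath.mem_points_stepsFromHeights hH 0 _).1 hP
  obtain ⟨j', hj', hjj', -, hhi⟩ := (LPath.mem_points_stepsFromHeights hK 0 _).1 hQ
  obtain rfl : j = j' := by simpa using hjj'
  have := h j (by simpa using Nat.lt_succ_of_le hj')
  rw [List.getD_cons_succ] at this
  omega

theorem separated_of_disjoint_points {a b : ℕ} {H K : List ℕ} (hH : (a :: H).IsChain (· ≥ ·))
    (hK : (b :: K).IsChain (· ≥ ·)) (hba : b < a) (hlen : K.length < H.length)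
    (hdisj : ∀ pt ∈ (heightPath (a :: H)).points, pt ∉ (heightPath (b :: K)).points) :
    Separated (a :: H) (b :: K) := by
  -- if the top of column `j` of the lower path is below the top of column `j` of the upper path,
  -- it must also be below its bottom, or it would be a common point
  have column : ∀ j ≤ K.length, (b :: K).getD j 0 ≤ (a :: H).getD j 0 →
      (b :: K).getD j 0 < H.getD j 0 := by
    intro j hj hle
    by_contra! hge
    refine hdisj ((j : ℤ), ((b :: K).getD j 0 : ℤ)) ?_ ?_
    · exact (LPath.mem_points_stepsFromHeights hH 0 _).2
        ⟨j, by omega, by simp, Nat.cast_le.2 hge, Nat.cast_le.2 hle⟩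
    · refine (LPath.mem_points_stepsFromHeights hK 0 _).2 ⟨j, hj, by simp, ?_, le_rfl⟩
      exact Nat.cast_le.2 (List.antitone_getD hK j.le_succ)
  intro p hp
  induction p with
  | zero => exact column 0 (Nat.zero_le _) hba.le
  | succ p ih =>
    refine column (p + 1) (by simpa using hp) ?_
    exact (List.antitone_getD hK p.le_succ).trans (ih (by omega)).le

/-- `L = a :: H` lists the start height `a` of a path from `(0, a)` to `(a - 2, 0)` followed by
the heights of its `a - 2` east steps. -/
def IsHeightRow (n : ℕ) (L : List ℕ) : Prop :=
  ∃ a H, L = a :: H ∧ H.length + 2 = a ∧ a ≤ n ∧ L.IsChain (· ≥ ·)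

def IsLPath (n : ℕ) (P : LPath) : Prop :=
  ∃ h : ℤ, 2 ≤ h ∧ h ≤ (n : ℤ) ∧ P.start = (0, h) ∧ P.finish = (h - 2, 0)

def pathRow (P : LPath) : List ℕ := P.start.2.toNat :: eastHeights P.start.2.toNat P.steps

def DisjointAbove (P Q : LPath) : Prop :=
  Q.start.2 < P.start.2 ∧ ∀ pt ∈ P.points, pt ∉ Q.points

theorem isLPath_iff {n : ℕ} {q : ℤ × ℤ} {s : List Bool} :
    IsLPath n ⟨q, s⟩ ↔ ∃ a : ℕ, 2 ≤ a ∧ a ≤ n ∧ q = (0, (a : ℤ)) ∧ s.count false = a ∧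
      s.count true + 2 = a := by
  constructor
  · rintro ⟨h, h2, hn, rfl, hfin⟩
    rw [LPath.finish_eq, Prod.mk.injEq] at hfin
    lift h to ℕ using (by omega)
    exact ⟨h, by omega, by omega, rfl, by omega, by omega⟩
  · rintro ⟨a, h2, hn, rfl, hf, ht⟩
    refine ⟨a, by omega, by omega, rfl, ?_⟩
    rw [LPath.finish_eq, Prod.mk.injEq]
    omega

theorem IsHeightRow.isLPath_heightPath {n : ℕ} {L : List ℕ} (hL : IsHeightRow n L) :
    IsLPath n (heightPath L) := by
  obtain ⟨a, H, rfl, hlen, han, hch⟩ := hL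
  refine isLPath_iff.2 ⟨a, by omega, han, rfl, count_false_stepsFromHeights hch, ?_⟩
  rw [count_true_stepsFromHeights, hlen]

theorem IsLPath.isHeightRow_pathRow {n : ℕ} {P : LPath} (hP : IsLPath n P) :
    IsHeightRow n (pathRow P) := by
  obtain ⟨q, s⟩ := P
  obtain ⟨a, -, han, rfl, -, ht⟩ := isLPath_iff.1 hP
  refine ⟨a, eastHeights a s, by simp [pathRow], ?_, han, ?_⟩
  · rw [length_eastHeights, ht]
  · simpa [pathRow] using isChain_eastHeights a s

theorem pathRow_heightPath {a : ℕ} {H : List ℕ} (hH : (a :: H).IsChain (· ≥ ·)) :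
    pathRow (heightPath (a :: H)) = a :: H := by
  simp [pathRow, heightPath, eastHeights_stepsFromHeights hH]

theorem IsLPath.heightPath_pathRow {n : ℕ} {P : LPath} (hP : IsLPath n P) :
    heightPath (pathRow P) = P := by
  obtain ⟨q, s⟩ := P
  obtain ⟨a, -, -, rfl, hf, -⟩ := isLPath_iff.1 hP
  simp [pathRow, heightPath, stepsFromHeights_eastHeights hf]

theorem separated_iff_disjointAbove {n : ℕ} {L M : List ℕ} (hL : IsHeightRow n L)
    (hM : IsHeightRow n M) : Separated L M ↔ DisjointAbove (heightPath L) (heightPath M) := by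
  obtain ⟨a, H, rfl, hHa, -, hH⟩ := hL
  obtain ⟨b, K, rfl, hKb, -, hK⟩ := hM
  refine ⟨fun h => ⟨?_, h.disjoint_points hH hK⟩, fun ⟨hba, hdisj⟩ => ?_⟩
  · exact Int.ofNat_lt.2 (h.head_lt hH)
  · have hba : b < a := Int.ofNat_lt.1 hba
    exact separated_of_disjoint_points hH hK hba (by omega) hdisj

theorem bijOn_heightPath (n : ℕ) :
    Set.BijOn (List.map heightPath) {Ls | (∀ L ∈ Ls, IsHeightRow n L) ∧ Ls.IsChain Separated}
      {F | (∀ P ∈ F, IsLPath n P) ∧ F.IsChain DisjointAbove} := by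
  refine List.bijOn_map (s := {L | IsHeightRow n L}) (t := {P | IsLPath n P})
    ⟨fun L hL => ?_, fun P (hP : IsLPath n P) => hP.heightPath_pathRow⟩
    (fun L (hL : IsHeightRow n L) => hL.isLPath_heightPath)
    (fun P (hP : IsLPath n P) => hP.isHeightRow_pathRow)
    fun L hL M hM => separated_iff_disjointAbove hL hM
  obtain ⟨a, H, rfl, -, -, hH⟩ := hL
  exact pathRow_heightPath hH

theorem inL_iff {n : ℕ} {F : List LPath} :
    InL n F ↔ (∀ P ∈ F, IsLPath n P) ∧ F.IsChain DisjointAbove := by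
  refine ⟨fun ⟨hF, hstart, hdisj⟩ => ⟨hF, List.isChain_and.2 ⟨hstart, hdisj.isChain⟩⟩,
    fun hF => ⟨hF.1, (List.isChain_and.1 hF.2).1, ?_⟩⟩
  -- `F` comes from the family of height sequences `Ls`, which is pairwise separated
  obtain ⟨Ls, ⟨hLs, hsep⟩, rfl⟩ := (bijOn_heightPath n).surjOn hF
  refine List.pairwise_map.2 ((Separated.pairwise ?_ hsep).imp_of_mem fun hL hM h =>
    ((separated_iff_disjointAbove (hLs _ hL) (hLs _ hM)).1 h).2)
  rintro L hL
  obtain ⟨a, H, rfl, -, -, hH⟩ := hLs L hL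
  exact hH

def IsDPPRow (n : ℕ) (row : List ℕ) : Prop :=
  ∃ a A, row = a :: A ∧ A.length + 2 ≤ a ∧ a ≤ n ∧ (∀ x ∈ A, 0 < x) ∧ row.IsChain (· ≥ ·)

def DPPAdjacent (r s : List ℕ) : Prop :=
  s.length < r.length ∧ (∀ p x y, s[p]? = some x → r[p + 1]? = some y → x < y) ∧
    ∀ x, s.head? = some x → x ≤ r.length

theorem isDPPRow_iff {n : ℕ} {row : List ℕ} :
    IsDPPRow n row ↔ row ≠ [] ∧ (∀ x ∈ row, 0 < x ∧ x ≤ n) ∧ row.IsChain (· ≥ ·) ∧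
      ∀ x, row.head? = some x → row.length < x := by
  constructor
  · rintro ⟨a, A, rfl, hlen, han, hpos, hch⟩
    have hle : ∀ x ∈ A, x ≤ a := fun x hx =>
      List.rel_of_pairwise_cons (List.isChain_iff_pairwise.1 hch) hx
    refine ⟨List.cons_ne_nil a A, ?_, hch, ?_⟩
    · simp only [List.mem_cons, forall_eq_or_imp]
      exact ⟨⟨by omega, han⟩, fun x hx => ⟨hpos x hx, (hle x hx).trans han⟩⟩
    · rintro x ⟨⟩
      rw [List.length_cons]
      omega
  · rintro ⟨hne, hbd, hch, hhead⟩
    obtain ⟨a, A, rfl⟩ := List.exists_cons_of_ne_nil hne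
    have := hhead a rfl
    simp only [List.length_cons] at this
    exact ⟨a, A, rfl, by omega, (hbd a List.mem_cons_self).2,
      fun x hx => (hbd x (List.mem_cons_of_mem a hx)).1, hch⟩

theorem isDPP_zero_iff {n : ℕ} {rows : List (List ℕ)} :
    IsDPP 0 n rows ↔ (∀ row ∈ rows, IsDPPRow n row) ∧ rows.IsChain DPPAdjacent := by
  unfold IsDPP DPPAdjacent
  change _ ∧ _ ∧ rows.IsChain _ ∧ _ ∧ rows.IsChain _ ∧ _ ∧ rows.IsChain _ ↔ _
  simp only [isDPPRow_iff, List.isChain_and, forall_and, sub_zero, Nat.cast_lt, Nat.cast_le,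
    Option.pure_def, Option.bind_eq_bind, Option.bind_eq_some_iff, Option.some.injEq,
    forall_exists_index, and_imp, forall_apply_eq_imp_iff₂, ge_iff_le]
  tauto

theorem IsDPPRow.pos {n : ℕ} {row : List ℕ} (h : IsDPPRow n row) : ∀ x ∈ row, 0 < x :=
  fun x hx => (isDPPRow_iff.1 h).2.1 x hx |>.1

def padRow : List ℕ → List ℕ
  | [] => []
  | a :: A => a :: (A ++ List.replicate (a - 2 - A.length) 0)

def unpadRow (L : List ℕ) : List ℕ := L.takeWhile (0 < ·)

theorem unpadRow_cons {a : ℕ} (ha : 0 < a) (L : List ℕ) :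
    unpadRow (a :: L) = a :: unpadRow L :=
  List.takeWhile_cons_of_pos (by simpa using ha)

theorem phiRow_eq_heightPath_padRow (row : List ℕ) : phiRow row = heightPath (padRow row) := by
  cases row <;> rfl

theorem getD_padRow (row : List ℕ) (p : ℕ) : (padRow row).getD p 0 = row.getD p 0 := by
  cases row with
  | nil => rfl
  | cons a A =>
    cases p with
    | zero => rfl
    | succ p => simp only [padRow, List.getD_cons_succ]; grind

theorem IsDPPRow.isHeightRow_padRow {n : ℕ} {row : List ℕ} (h : IsDPPRow n row) :
    IsHeightRow n (padRow row) := by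
  obtain ⟨a, A, rfl, hlen, han, -, hch⟩ := h
  refine ⟨a, _, rfl, by rw [List.length_append, List.length_replicate]; omega, han, ?_⟩
  rw [padRow, ← List.cons_append, List.isChain_append]
  refine ⟨hch, List.isChain_replicate_of_rel _ le_rfl, fun x _ y hy => ?_⟩
  rw [List.eq_of_mem_replicate (List.mem_of_mem_head? hy)]
  exact Nat.zero_le x

theorem IsDPPRow.unpadRow_padRow {n : ℕ} {row : List ℕ} (h : IsDPPRow n row) :
    unpadRow (padRow row) = row := by
  obtain ⟨a, A, rfl, hlen, -, hpos, -⟩ := h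
  rw [padRow, unpadRow_cons (by omega), unpadRow,
    List.takeWhile_append_of_pos (by simpa using hpos), List.takeWhile_replicate]
  simp

theorem takeWhile_pos_append_replicate {H : List ℕ} (hH : H.IsChain (· ≥ ·)) :
    H.takeWhile (0 < ·) ++ List.replicate (H.length - (H.takeWhile (0 < ·)).length) 0 = H := by
  conv_rhs => rw [← List.takeWhile_append_dropWhile (p := (0 < ·)) (l := H)]
  congr 1
  refine (List.eq_replicate_iff.2 ⟨?_, fun x hx => ?_⟩).symm
  · have := congrArg List.length (List.takeWhile_append_dropWhile (p := (0 < ·)) (l := H))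
    rw [List.length_append] at this
    omega
  · obtain ⟨y, t, hyt⟩ := List.exists_cons_of_ne_nil (List.ne_nil_of_mem hx)
    have hy : y = 0 := by
      simpa [hyt] using List.head_dropWhile_not (0 < ·) (l := H) (by simp [hyt])
    have hyt_chain : (y :: t).IsChain (· ≥ ·) := hyt ▸ hH.suffix (List.dropWhile_suffix _)
    rw [hyt] at hx
    rcases List.mem_cons.1 hx with rfl | hx
    · exact hy
    · have := List.rel_of_pairwise_cons (List.isChain_iff_pairwise.1 hyt_chain) hx
      omega

theorem IsHeightRow.padRow_unpadRow {n : ℕ} {L : List ℕ} (h : IsHeightRow n L) :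
    padRow (unpadRow L) = L := by
  obtain ⟨a, H, rfl, hlen, -, hch⟩ := h
  rw [unpadRow_cons (by omega), unpadRow, padRow,
    show a - 2 = H.length by omega, takeWhile_pos_append_replicate (H := H) hch.tail]

theorem IsHeightRow.isDPPRow_unpadRow {n : ℕ} {L : List ℕ} (h : IsHeightRow n L) :
    IsDPPRow n (unpadRow L) := by
  obtain ⟨a, H, rfl, hlen, han, hch⟩ := h
  rw [unpadRow_cons (by omega), unpadRow]
  refine ⟨a, _, rfl, ?_, han, fun x hx => by simpa using List.mem_takeWhile_imp hx, ?_⟩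
  · have := (List.takeWhile_prefix (l := H) (0 < ·)).length_le
    omega
  · exact hch.prefix (List.cons_prefix_cons.2 ⟨rfl, List.takeWhile_prefix _⟩)

theorem dppAdjacent_iff_separated {n : ℕ} {r s : List ℕ} (hr : IsDPPRow n r) (hs : IsDPPRow n s) :
    DPPAdjacent r s ↔ Separated (padRow r) (padRow s) := by
  have hpos := hr.pos
  obtain ⟨b, B, rfl, hBb, -, -, -⟩ := hs
  have hlen : (padRow (b :: B)).length = b - 1 := by
    rw [padRow, List.length_cons, List.length_append, List.length_replicate]; omega
  simp only [Separated, getD_padRow, hlen]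
  constructor
  · rintro ⟨hsr, hcol, hhead⟩ p hp
    have hb : b ≤ r.length := hhead b rfl
    by_cases hps : p < (b :: B).length
    · rw [List.getD_eq_getElem _ _ hps, List.getD_eq_getElem _ _ (by omega)]
      exact hcol p _ _ (List.getElem?_eq_getElem hps) (List.getElem?_eq_getElem _)
    · rw [List.getD_eq_default _ _ (not_lt.1 hps), List.getD_eq_getElem _ _ (by omega)]
      exact hpos _ (List.getElem_mem _)
  · intro hsep
    have hb : b ≤ r.length := by
      have := hsep (b - 2) (by omega)
      by_contra h
      rw [List.getD_eq_default r 0 (by omega)] at this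
      omega
    refine ⟨by rw [List.length_cons]; omega, fun p x y hx hy => ?_, fun x hx => ?_⟩
    · have hp := (List.getElem?_eq_some_iff.1 hx).1
      have := hsep p (by rw [List.length_cons] at hp; omega)
      rwa [List.getD_eq_getElem?_getD, hx, List.getD_eq_getElem?_getD, hy] at this
    · obtain rfl : b = x := by simpa using hx
      exact hb

theorem bijOn_padRow (n : ℕ) :
    Set.BijOn (List.map padRow) {rows | (∀ r ∈ rows, IsDPPRow n r) ∧ rows.IsChain DPPAdjacent}
      {Ls | (∀ L ∈ Ls, IsHeightRow n L) ∧ Ls.IsChain Separated} :=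
  List.bijOn_map (s := {r | IsDPPRow n r}) (t := {L | IsHeightRow n L})
    ⟨fun r (hr : IsDPPRow n r) => hr.unpadRow_padRow,
      fun L (hL : IsHeightRow n L) => hL.padRow_unpadRow⟩
    (fun r (hr : IsDPPRow n r) => hr.isHeightRow_padRow)
    (fun L (hL : IsHeightRow n L) => hL.isDPPRow_unpadRow)
    fun _ hr _ hs => dppAdjacent_iff_separated hr hs

theorem stmt1_general (n : ℕ) :
    Set.BijOn Phi {rows : List (List ℕ) | IsDPP 0 n rows} {F : List LPath | InL n F} := by
  have hPhi : Phi = List.map heightPath ∘ List.map padRow := by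
    funext rows
    simp only [Phi, Function.comp_apply, List.map_map]
    exact List.map_congr_left fun r _ => phiRow_eq_heightPath_padRow r
  simp only [hPhi, isDPP_zero_iff, inL_iff]
  exact (bijOn_heightPath n).comp (bijOn_padRow n)

/-- `Φ` is a bijection from the set of descending plane partitions with entries at
most `n` onto the set `L(n)` of nonintersecting lattice-path families. -/
theorem stmt1 (n : ℕ) (hn : 0 < n) :
    Set.BijOn Phi {rows : List (List ℕ) | IsDPP 0 n rows} {F : List LPath | InL n F} :=
  stmt1_general n
end

section
/- For every positive integer n and every \pi \in DPP(n) with k rows, the total number of entries i(\pi) equals k plus the total number of east steps at positive height among the paths of \Phi(\pi). -/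
/-! The path that `Φ` assigns to a row `a :: rest` takes its east steps at the heights `rest`,
all positive, and then only at height `0`. So each row of length `ℓ` contributes exactly
`ℓ - 1` east steps at positive height, and summing over the rows gives the identity. -/

lemma LPath.eastSteps_cons (p : ℤ × ℤ) (b : Bool) (s : List Bool) :
    LPath.eastSteps ⟨p, b :: s⟩ =
      (if b then [p] else []) ++ LPath.eastSteps ⟨p + stepVec b, s⟩ := by
  cases b <;> simp [LPath.eastSteps, LPath.points, List.scanl]

lemma LPath.eastSteps_replicate_false_append (p : ℤ × ℤ) (m : ℕ) (s : List Bool) :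
    LPath.eastSteps ⟨p, List.replicate m false ++ s⟩ =
      LPath.eastSteps ⟨p + (0, -(m : ℤ)), s⟩ := by
  induction m generalizing p with
  | zero => simp [Prod.mk_zero_zero]
  | succ m ih =>
    rw [List.replicate_succ, List.cons_append, eastSteps_cons, ih]
    simp only [stepVec, if_false, Bool.false_eq_true, List.nil_append, add_assoc, Prod.mk_add_mk]
    push_cast
    ring_nf

lemma map_snd_eastSteps_stepsFromHeights (x : ℤ) (top : ℕ) (H : List ℕ)
    (hH : (top :: H).IsChain (· ≥ ·)) :
    (LPath.eastSteps ⟨(x, (top : ℤ)), stepsFromHeights top H⟩).map Prod.snd = H.map (↑) := by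
  induction H generalizing x top with
  | nil =>
    rw [stepsFromHeights, ← List.append_nil (List.replicate top false),
      LPath.eastSteps_replicate_false_append]
    rfl
  | cons h t ih =>
    obtain ⟨hh, ht⟩ := List.isChain_cons_cons.mp hH
    have hdrop : (x, (top : ℤ)) + (0, -((top - h : ℕ) : ℤ)) = (x, (h : ℤ)) := by
      simp [Nat.cast_sub hh]
    rw [stepsFromHeights, LPath.eastSteps_replicate_false_append, hdrop, LPath.eastSteps_cons]
    simp [stepVec, ih _ _ ht]

lemma map_snd_eastSteps_phiRow_cons (a : ℕ) (rest : List ℕ) (hrow : (a :: rest).IsChain (· ≥ ·)) :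
    (phiRow (a :: rest)).eastSteps.map Prod.snd =
      (rest ++ List.replicate (a - 2 - rest.length) 0).map ((↑) : ℕ → ℤ) := by
  apply map_snd_eastSteps_stepsFromHeights
  rw [← List.cons_append]
  refine List.isChain_append.mpr ⟨hrow, List.isChain_replicate_of_rel _ le_rfl, ?_⟩
  intro x _ y hy
  simp [List.eq_of_mem_replicate (List.mem_of_mem_head? hy)]

lemma countP_pos_eastSteps_phiRow_add_one (row : List ℕ) (hne : row ≠ [])
    (hpos : ∀ x ∈ row, 0 < x) (hdec : row.IsChain (· ≥ ·)) :
    ((phiRow row).eastSteps.countP fun pt => decide (0 < pt.2)) + 1 = row.length := by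
  obtain ⟨a, rest, rfl⟩ := List.exists_cons_of_ne_nil hne
  have hcount := congrArg (List.countP fun y : ℤ => decide (0 < y))
    (map_snd_eastSteps_phiRow_cons a rest hdec)
  simp only [List.countP_map, List.countP_append] at hcount
  rw [Function.comp_def] at hcount
  rw [hcount, List.countP_eq_length.mpr, List.countP_eq_zero.mpr] <;> simp_all

theorem stmt2_general (n : ℕ) (rows : List (List ℕ)) (h : IsDPP 0 n rows) :
    numEntries rows =
      rows.length +
        ((Phi rows).map fun P => P.eastSteps.countP fun pt => decide (0 < pt.2)).sum := by
  obtain ⟨hne, hpos, -, hdec, -⟩ := h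
  have hlength : rows.map List.length =
      rows.map fun row => ((phiRow row).eastSteps.countP fun pt => decide (0 < pt.2)) + 1 :=
    List.map_congr_left fun row hrow => (countP_pos_eastSteps_phiRow_add_one row (hne row hrow)
      (fun x hx => (hpos row hrow x hx).1) (hdec row hrow)).symm
  rw [numEntries, hlength, List.sum_map_add, Phi, List.map_map]
  simp [add_comm, Function.comp_def]

/-- For every `π ∈ DPP(n)` with `k` rows, the total number of entries `i(π)` equals
`k` plus the number of east steps at positive height among the paths of `Φ(π)`. -/
theorem stmt2 (n : ℕ) (hn : 0 < n) (rows : List (List ℕ)) (h : IsDPP 0 n rows) :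
    numEntries rows =
      rows.length +
        ((Phi rows).map fun P => P.eastSteps.countP fun pt => decide (0 < pt.2)).sum :=
  stmt2_general n rows h
end

section
/- For every positive integer n and every \pi \in DPP(n), the number of special entries s(\pi) equals the number of east steps among the paths of \Phi(\pi) whose right endpoint (m, h) satisfies 1 \le h \le m. -/
/-!
In the path of a row `a, π₁, π₂, …` the `j`-th east step goes from column `j - 1` to column `j`
at height `π_j`, so its right endpoint `(j, π_j)` satisfies `1 ≤ h ≤ m` exactly when the entry
`π_j`, which lies `j` columns right of the diagonal, is special. The padding steps at height `0`
are never counted, and the diagonal entry `a` is never special because it is positive.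
-/

open Finset

namespace LPath

lemma eastSteps_cons_s3 (p : ℤ × ℤ) (b : Bool) (s : List Bool) :
    (⟨p, b :: s⟩ : LPath).eastSteps =
      (if b then [p] else []) ++ (⟨p + stepVec b, s⟩ : LPath).eastSteps := by
  cases b <;> simp [eastSteps, points, List.scanl_cons]

lemma eastSteps_replicate_false_append_s3 (p : ℤ × ℤ) (m : ℕ) (s : List Bool) :
    (⟨p, List.replicate m false ++ s⟩ : LPath).eastSteps =
      (⟨(p.1, p.2 - m), s⟩ : LPath).eastSteps := by
  induction m generalizing p with
  | zero => simp
  | succ k ih =>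
    rw [List.replicate_succ, List.cons_append, eastSteps_cons_s3, ih]
    simp only [stepVec, Bool.false_eq_true, if_false, List.nil_append, Prod.fst_add,
      Prod.snd_add, add_zero, Nat.cast_succ]
    ring_nf

end LPath

lemma eastSteps_stepsFromHeights (x : ℤ) (top : ℕ) (H : List ℕ)
    (hH : (top :: H).IsChain (· ≥ ·)) :
    (⟨(x, top), stepsFromHeights top H⟩ : LPath).eastSteps =
      (List.range H.length).map fun j : ℕ => (x + j, (H.getD j 0 : ℤ)) := by
  induction H generalizing x top with
  | nil =>
    rw [stepsFromHeights, ← List.append_nil (List.replicate _ _),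
      LPath.eastSteps_replicate_false_append_s3]
    rfl
  | cons h t ih =>
    obtain ⟨hle, ht⟩ := List.isChain_cons_cons.mp hH
    rw [stepsFromHeights, LPath.eastSteps_replicate_false_append_s3, LPath.eastSteps_cons_s3]
    have hstart : ((x, (top : ℤ) - ((top - h : ℕ) : ℤ)) : ℤ × ℤ) = (x, (h : ℤ)) := by
      simp [Nat.cast_sub hle]
    rw [hstart, List.length_cons, List.range_succ_eq_map, List.map_cons, List.map_map]
    simp only [if_true, List.singleton_append, stepVec, Prod.mk_add_mk, add_zero,
      ih (x + 1) h ht]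
    refine congrArg₂ _ (by simp) (List.map_congr_left fun j _ => ?_)
    simp only [Function.comp_apply, List.getD_cons_succ, Nat.cast_succ]
    ring_nf

lemma getD_append_replicate_default {α : Type*} (l : List α) (m : ℕ) (d : α) (j : ℕ) :
    (l ++ List.replicate m d).getD j d = l.getD j d := by
  grind [List.getD_append, List.getD_append_right, List.getD_eq_default]

lemma eastSteps_phiRow (a : ℕ) (rest : List ℕ) (hdec : (a :: rest).IsChain (· ≥ ·)) :
    (phiRow (a :: rest)).eastSteps =
      (List.range (rest.length + (a - 2 - rest.length))).map
        fun j : ℕ => ((j : ℤ), (rest.getD j 0 : ℤ)) := by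
  have hpad : (a :: (rest ++ List.replicate (a - 2 - rest.length) 0)).IsChain (· ≥ ·) := by
    rw [← List.cons_append]
    refine List.isChain_append.mpr
      ⟨hdec, List.isChain_replicate_of_rel _ le_rfl, fun _ _ _ hy => ?_⟩
    rw [List.eq_of_mem_replicate (List.mem_of_mem_head? hy)]
    exact Nat.zero_le _
  rw [phiRow, eastSteps_stepsFromHeights 0 a _ hpad, List.length_append, List.length_replicate]
  simp only [getD_append_replicate_default, zero_add]

lemma countP_eastSteps_phiRow (a : ℕ) (rest : List ℕ) (hdec : (a :: rest).IsChain (· ≥ ·)) :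
    (phiRow (a :: rest)).eastSteps.countP (fun pt => decide (1 ≤ pt.2 ∧ pt.2 ≤ pt.1 + 1)) =
      Nat.count (fun j => 1 ≤ rest.getD j 0 ∧ rest.getD j 0 ≤ j + 1) rest.length := by
  rw [eastSteps_phiRow a rest hdec, List.countP_map]
  calc _ = Nat.count (fun j => 1 ≤ rest.getD j 0 ∧ rest.getD j 0 ≤ j + 1)
        (rest.length + (a - 2 - rest.length)) := by
        simp only [Nat.count]
        congr
        funext j
        simp only [Function.comp_apply]
        norm_cast
    _ = _ := by
      rw [Nat.count_add, Nat.count_of_forall_not (n := a - 2 - rest.length), add_zero]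
      intro k _
      simp

lemma card_filter_getD_le_cons (a : ℕ) (rest : List ℕ) (ha : 0 < a) :
    #{p ∈ range (a :: rest).length | (a :: rest).getD p 0 ≤ p} =
      Nat.count (fun j => rest.getD j 0 ≤ j + 1) rest.length := by
  rw [← Nat.count_eq_card_filter_range, List.length_cons, Nat.count_succ']
  simp [ha.ne']

lemma card_special_eq_countP_eastSteps_phiRow (row : List ℕ) (hne : row ≠ [])
    (hpos : ∀ x ∈ row, 0 < x) (hdec : row.IsChain (· ≥ ·)) :
    #{p ∈ range row.length | row.getD p 0 ≤ p} =
      (phiRow row).eastSteps.countP (fun pt => decide (1 ≤ pt.2 ∧ pt.2 ≤ pt.1 + 1)) := by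
  obtain ⟨a, rest, rfl⟩ := List.exists_cons_of_ne_nil hne
  rw [card_filter_getD_le_cons a rest (hpos a List.mem_cons_self),
    countP_eastSteps_phiRow a rest hdec, Nat.count_eq_card_filter_range,
    Nat.count_eq_card_filter_range]
  refine congrArg card (filter_congr fun j hmem => ?_)
  have hj : j < rest.length := mem_range.mp hmem
  have : 0 < rest.getD j 0 := by
    rw [List.getD_eq_getElem _ _ hj]
    exact hpos _ (List.mem_cons_of_mem _ (List.getElem_mem hj))
  omega

theorem stmt3_general (n : ℕ) (rows : List (List ℕ)) (h : IsDPP 0 n rows) :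
    numSpecial rows =
      ((Phi rows).map fun P =>
        P.eastSteps.countP fun pt => decide (1 ≤ pt.2 ∧ pt.2 ≤ pt.1 + 1)).sum := by
  obtain ⟨hne, hbound, -, hdec, -⟩ := h
  rw [numSpecial, Phi, List.map_map]
  refine congrArg List.sum (List.map_congr_left fun row hrow => ?_)
  exact card_special_eq_countP_eastSteps_phiRow row (hne row hrow)
    (fun x hx => (hbound row hrow x hx).1) (hdec row hrow)

/-- For every `π ∈ DPP(n)`, the number of special entries `s(π)` equals the number of
east steps among the paths of `Φ(π)` whose right endpoint `(m, h)` satisfies `1 ≤ h ≤ m`.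
(An east step starting at `pt` has right endpoint `(pt.1 + 1, pt.2)`.) -/
theorem stmt3 (n : ℕ) (hn : 0 < n) (rows : List (List ℕ)) (h : IsDPP 0 n rows) :
    numSpecial rows =
      ((Phi rows).map fun P =>
        P.eastSteps.countP fun pt => decide (1 ≤ pt.2 ∧ pt.2 ≤ pt.1 + 1)).sum :=
  stmt3_general n rows h
end

section
/- For every positive integer n, the poset DPP(n) (ordered entrywise) is a lattice: any two descending plane partitions with entries at most n have a least upper bound and a greatest lower bound in DPP(n). -/
theorem List.isChain_iff_getElem? {α : Type*} {R : α → α → Prop} {l : List α} :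
    l.IsChain R ↔ ∀ i a b, l[i]? = some a → l[i + 1]? = some b → R a b := by
  rw [List.isChain_iff_getElem]
  constructor
  · intro h i a b ha hb
    obtain ⟨hi, rfl⟩ := List.getElem?_eq_some_iff.1 hb
    obtain ⟨-, rfl⟩ := List.getElem?_eq_some_iff.1 ha
    exact h i hi
  · intro h i hi
    exact h i _ _ (List.getElem?_eq_getElem (by omega)) (List.getElem?_eq_getElem hi)

theorem List.exists_getElem?_of_getElem?_succ {α : Type*} {l : List α} {i : ℕ} {b : α}
    (h : l[i + 1]? = some b) : ∃ a, l[i]? = some a :=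
  ⟨_, List.getElem?_eq_getElem (Nat.lt_of_succ_lt (List.getElem?_eq_some_iff.1 h).1)⟩

theorem List.getElem?_zipWith_eq_map₂ {α β γ : Type*} (f : α → β → γ) (l : List α)
    (l' : List β) (i : ℕ) : (List.zipWith f l l')[i]? = Option.map₂ f l[i]? l'[i]? := by
  rw [List.getElem?_zipWith]
  cases l[i]? <;> cases l'[i]? <;> rfl

def entryD (π : List (List ℕ)) (r p : ℕ) : ℕ := (entry? π r p).getD 0

def EntriesPos (π : List (List ℕ)) : Prop := ∀ r p x, entry? π r p = some x → 0 < x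

def RowsNonempty (π : List (List ℕ)) : Prop := ∀ r, π[r]?.isSome → (entry? π r 0).isSome

section Entries

variable {π σ : List (List ℕ)} {r p x : ℕ} {row : List ℕ}

theorem entry?_eq_some_iff :
    entry? π r p = some x ↔ ∃ row, π[r]? = some row ∧ row[p]? = some x := by
  simp [entry?, Option.bind_eq_some_iff]

theorem entry?_eq_getElem (hr : π[r]? = some row) (hp : p < row.length) :
    entry? π r p = some row[p] := by
  simp [entry?, hr, hp]

theorem entryD_eq_of_entry?_eq_some (h : entry? π r p = some x) : entryD π r p = x := by
  simp [entryD, h]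

theorem entryD_eq_of_getElem? (hr : π[r]? = some row) (hp : row[p]? = some x) :
    entryD π r p = x :=
  entryD_eq_of_entry?_eq_some (entry?_eq_some_iff.2 ⟨row, hr, hp⟩)

theorem entry?_eq_some_entryD (h : 0 < entryD π r p) : entry? π r p = some (entryD π r p) := by
  unfold entryD at *
  cases h' : entry? π r p <;> simp_all

theorem exists_row_of_entryD_pos (h : 0 < entryD π r p) :
    ∃ row, π[r]? = some row ∧ row[p]? = some (entryD π r p) :=
  entry?_eq_some_iff.1 (entry?_eq_some_entryD h)

theorem lt_length_of_entryD_pos (hr : π[r]? = some row) (h : 0 < entryD π r p) :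
    p < row.length := by
  obtain ⟨row', hr', hp⟩ := exists_row_of_entryD_pos h
  rw [hr, Option.some_inj] at hr'
  exact hr' ▸ (List.getElem?_eq_some_iff.1 hp).1

theorem EntriesPos.entryD_pos (hπ : EntriesPos π) (h : entry? π r p = some x) :
    0 < entryD π r p := by
  rw [entryD_eq_of_entry?_eq_some h]
  exact hπ r p x h

theorem RowsNonempty.entryD_last_pos (hne : RowsNonempty π) (hpos : EntriesPos π)
    (hr : π[r]? = some row) : 0 < row.length ∧ 0 < entryD π r (row.length - 1) := by
  obtain ⟨x, hx⟩ := Option.isSome_iff_exists.1 (hne r (by simp [hr]))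
  obtain ⟨row', hr', h0⟩ := entry?_eq_some_iff.1 hx
  rw [hr, Option.some_inj] at hr'
  have hlen : 0 < row.length := hr' ▸ (List.getElem?_eq_some_iff.1 h0).1
  exact ⟨hlen, hpos.entryD_pos (entry?_eq_getElem hr (by omega))⟩

theorem dppLe_iff_entryD_le (hπ : EntriesPos π) : dppLe π σ ↔ entryD π ≤ entryD σ := by
  constructor
  · intro h r p
    cases hx : entry? π r p with
    | none => simp [entryD, hx]
    | some x =>
      obtain ⟨y, hy, hxy⟩ := h r p x hx
      rwa [entryD_eq_of_entry?_eq_some hx, entryD_eq_of_entry?_eq_some hy]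
  · intro h r p x hx
    have hle : x ≤ entryD σ r p := entryD_eq_of_entry?_eq_some hx ▸ h r p
    exact ⟨_, entry?_eq_some_entryD ((hπ r p x hx).trans_le hle), hle⟩

end Entries

/-- `first_gt` and `first_le` are the two conditions on first entries, the number of entries of
row `r` being the number of `p` with `0 < f r p`. -/
structure IsDPPArray (d : ℤ) (n : ℕ) (f : ℕ → ℕ → ℕ) : Prop where
  le_bound : ∀ r p, f r p ≤ n
  antitone_row : ∀ r p, f r (p + 1) ≤ f r p
  lt_above : ∀ r p, 0 < f (r + 1) p → f (r + 1) p < f r (p + 1)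
  first_gt : ∀ r p : ℕ, 0 < f r p → (p : ℤ) + 1 - d < f r 0
  first_le : ∀ r p : ℕ, 0 < f (r + 1) 0 → (p : ℤ) < f (r + 1) 0 + d → 0 < f r p

namespace IsDPPArray

variable {d : ℤ} {n : ℕ} {f g : ℕ → ℕ → ℕ}

theorem sup (hf : IsDPPArray d n f) (hg : IsDPPArray d n g) : IsDPPArray d n (f ⊔ g) where
  le_bound r p := max_le (hf.le_bound r p) (hg.le_bound r p)
  antitone_row r p := max_le_max (hf.antitone_row r p) (hg.antitone_row r p)
  lt_above r p := by
    have := hf.lt_above r p; have := hg.lt_above r p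
    simp only [Pi.sup_apply]; omega
  first_gt r p := by
    have := hf.first_gt r p; have := hg.first_gt r p
    simp only [Pi.sup_apply]; omega
  first_le r p := by
    have := hf.first_le r p; have := hg.first_le r p
    simp only [Pi.sup_apply]; omega

theorem inf (hf : IsDPPArray d n f) (hg : IsDPPArray d n g) : IsDPPArray d n (f ⊓ g) where
  le_bound r p := min_le_of_left_le (hf.le_bound r p)
  antitone_row r p := min_le_min (hf.antitone_row r p) (hg.antitone_row r p)
  lt_above r p := by
    have := hf.lt_above r p; have := hg.lt_above r p
    simp only [Pi.inf_apply]; omega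
  first_gt r p := by
    have := hf.first_gt r p; have := hg.first_gt r p
    simp only [Pi.inf_apply]; omega
  first_le r p := by
    have := hf.first_le r p; have := hg.first_le r p
    simp only [Pi.inf_apply]; omega

end IsDPPArray

section Characterization

variable {d : ℤ} {n : ℕ} {π : List (List ℕ)}

theorem IsDPP.entriesPos (h : IsDPP d n π) : EntriesPos π := by
  intro r p x hx
  obtain ⟨row, hr, hp⟩ := entry?_eq_some_iff.1 hx
  exact (h.2.1 row (List.mem_of_getElem? hr) x (List.mem_of_getElem? hp)).1

theorem IsDPP.rowsNonempty (h : IsDPP d n π) : RowsNonempty π := by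
  intro r hr
  obtain ⟨row, hrow⟩ := Option.isSome_iff_exists.1 hr
  have := h.1 row (List.mem_of_getElem? hrow)
  simp [entry?_eq_getElem hrow (List.length_pos_iff.2 this)]

theorem IsDPP.isDPPArray (h : IsDPP d n π) : IsDPPArray d n (entryD π) := by
  have hpos := h.entriesPos
  obtain ⟨-, hbound, hlen, hrow, hcol, hfirst, hnext⟩ := h
  replace hlen := List.isChain_iff_getElem?.1 hlen
  replace hcol := List.isChain_iff_getElem?.1 hcol
  replace hnext := List.isChain_iff_getElem?.1 hnext
  refine ⟨fun r p => ?_, fun r p => ?_, fun r p h0 => ?_, fun r p h0 => ?_, fun r p h0 hp => ?_⟩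
  · rcases Nat.eq_zero_or_pos (entryD π r p) with h0 | h0
    · simp [h0]
    obtain ⟨row, hr, hp⟩ := exists_row_of_entryD_pos h0
    exact (hbound row (List.mem_of_getElem? hr) _ (List.mem_of_getElem? hp)).2
  · rcases Nat.eq_zero_or_pos (entryD π r (p + 1)) with h0 | h0
    · simp [h0]
    obtain ⟨row, hr, hp⟩ := exists_row_of_entryD_pos h0
    have hlt := (List.getElem?_eq_some_iff.1 hp).1
    rw [entryD_eq_of_entry?_eq_some (entry?_eq_getElem hr (by omega : p < row.length))]
    exact List.isChain_iff_getElem?.1 (hrow row (List.mem_of_getElem? hr)) p _ _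
      (List.getElem?_eq_getElem _) hp
  · obtain ⟨b, hb, hbp⟩ := exists_row_of_entryD_pos h0
    obtain ⟨a, ha⟩ := List.exists_getElem?_of_getElem?_succ hb
    have hlt : p + 1 < a.length := by
      have := (List.getElem?_eq_some_iff.1 hbp).1; have := hlen r a b ha hb; omega
    rw [entryD_eq_of_entry?_eq_some (entry?_eq_getElem ha hlt)]
    exact hcol r a b ha hb p _ _ hbp (List.getElem?_eq_getElem hlt)
  · obtain ⟨a, ha, hap⟩ := exists_row_of_entryD_pos h0
    have hlt := (List.getElem?_eq_some_iff.1 hap).1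
    rw [entryD_eq_of_entry?_eq_some (entry?_eq_getElem ha (by omega : 0 < a.length))]
    have := hfirst a (List.mem_of_getElem? ha) a[0] (by simp [List.head?_eq_getElem?])
    omega
  · obtain ⟨b, hb, hb0⟩ := exists_row_of_entryD_pos h0
    obtain ⟨a, ha⟩ := List.exists_getElem?_of_getElem?_succ hb
    have := hnext r a b ha hb _ (by rw [List.head?_eq_getElem?, hb0]; rfl)
    have hlt : p < a.length := by omega
    exact hpos.entryD_pos (entry?_eq_getElem ha hlt)

theorem isDPP_of_isDPPArray (hne : RowsNonempty π) (hpos : EntriesPos π)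
    (hf : IsDPPArray d n (entryD π)) : IsDPP d n π := by
  have pos_of {r p x : ℕ} {row : List ℕ} (hr : π[r]? = some row) (hp : row[p]? = some x) :
      0 < entryD π r p := hpos.entryD_pos (entry?_eq_some_iff.2 ⟨row, hr, hp⟩)
  refine ⟨fun row hmem => ?_, fun row hmem x hx => ?_,
    List.isChain_iff_getElem?.2 fun r a b ha hb => ?_,
    fun row hmem => List.isChain_iff_getElem?.2 fun p x y hx hy => ?_,
    List.isChain_iff_getElem?.2 fun r a b ha hb p x y hx hy => ?_, fun row hmem x hx => ?_,
    List.isChain_iff_getElem?.2 fun r a b ha hb x hx => ?_⟩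
  · obtain ⟨r, hr⟩ := List.mem_iff_getElem?.1 hmem
    exact List.ne_nil_of_length_pos (hne.entryD_last_pos hpos hr).1
  · obtain ⟨r, hr⟩ := List.mem_iff_getElem?.1 hmem
    obtain ⟨p, hp⟩ := List.mem_iff_getElem?.1 hx
    exact ⟨hpos r p x (entry?_eq_some_iff.2 ⟨row, hr, hp⟩),
      entryD_eq_of_getElem? hr hp ▸ hf.le_bound r p⟩
  · have hlast := (hne.entryD_last_pos hpos hb).2
    have := lt_length_of_entryD_pos ha (hlast.trans (hf.lt_above r _ hlast))
    omega
  · obtain ⟨r, hr⟩ := List.mem_iff_getElem?.1 hmem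
    rw [← entryD_eq_of_getElem? hr hx, ← entryD_eq_of_getElem? hr hy]
    exact hf.antitone_row r p
  · rw [← entryD_eq_of_getElem? hb hx, ← entryD_eq_of_getElem? ha hy]
    exact hf.lt_above r p (pos_of hb hx)
  · obtain ⟨r, hr⟩ := List.mem_iff_getElem?.1 hmem
    rw [List.head?_eq_getElem?] at hx
    obtain ⟨hlen, hlast⟩ := hne.entryD_last_pos hpos hr
    have := hf.first_gt r _ hlast
    rw [entryD_eq_of_getElem? hr hx] at this
    omega
  · cases hb0 : b.head? with
    | none => simp [hb0] at hx
    | some y =>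
      obtain rfl : (y : ℤ) = x := by simpa [hb0] using hx
      rw [List.head?_eq_getElem?] at hb0
      by_contra hlt
      have := lt_length_of_entryD_pos ha
        (hf.first_le r a.length (pos_of hb hb0) (by rw [entryD_eq_of_getElem? hb hb0]; omega))
      omega

end Characterization

def rowSup (a b : List ℕ) : List ℕ :=
  List.zipWithAll (fun x y => max (x.getD 0) (y.getD 0)) a b

def dppSup (π σ : List (List ℕ)) : List (List ℕ) :=
  List.zipWithAll (fun a b => rowSup (a.getD []) (b.getD [])) π σ

def dppInf (π σ : List (List ℕ)) : List (List ℕ) :=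
  List.zipWith (List.zipWith min) π σ

section Sup

variable {π σ : List (List ℕ)}

theorem isSome_getElem?_dppSup (r : ℕ) :
    (dppSup π σ)[r]?.isSome = (π[r]?.isSome || σ[r]?.isSome) := by
  rw [dppSup, List.getElem?_zipWithAll]
  cases π[r]? <;> cases σ[r]? <;> rfl

theorem getElem?_rowSup (a b : List ℕ) (p : ℕ) :
    (rowSup a b)[p]? = Option.merge max a[p]? b[p]? := by
  rw [rowSup, List.getElem?_zipWithAll]
  cases a[p]? <;> cases b[p]? <;> simp

theorem entry?_dppSup (r p : ℕ) :
    entry? (dppSup π σ) r p = Option.merge max (entry? π r p) (entry? σ r p) := by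
  simp only [entry?, dppSup, List.getElem?_zipWithAll]
  cases π[r]? <;> cases σ[r]? <;> simp [getElem?_rowSup]

theorem entryD_dppSup : entryD (dppSup π σ) = entryD π ⊔ entryD σ := by
  ext r p
  simp only [entryD, entry?_dppSup, Pi.sup_apply]
  cases entry? π r p <;> cases entry? σ r p <;> simp

theorem EntriesPos.dppSup (hπ : EntriesPos π) (hσ : EntriesPos σ) : EntriesPos (dppSup π σ) := by
  intro r p x hx
  rw [entry?_dppSup, Option.merge_eq_some_iff] at hx
  rcases hx with ⟨h, -⟩ | ⟨-, h⟩ | ⟨y, z, hy, hz, rfl⟩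
  · exact hπ r p x h
  · exact hσ r p x h
  · exact (hπ r p y hy).trans_le (le_max_left y z)

theorem RowsNonempty.dppSup (hπ : RowsNonempty π) (hσ : RowsNonempty σ) :
    RowsNonempty (dppSup π σ) := by
  intro r hr
  rw [isSome_getElem?_dppSup, Bool.or_eq_true] at hr
  rw [entry?_dppSup, Option.isSome_merge, Bool.or_eq_true]
  exact hr.imp (hπ r) (hσ r)

end Sup

section Inf

variable {π σ : List (List ℕ)}

theorem isSome_getElem?_dppInf (r : ℕ) :
    (dppInf π σ)[r]?.isSome = (π[r]?.isSome && σ[r]?.isSome) := by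
  rw [dppInf, List.getElem?_zipWith]
  cases π[r]? <;> cases σ[r]? <;> rfl

theorem entry?_dppInf (r p : ℕ) :
    entry? (dppInf π σ) r p = Option.map₂ min (entry? π r p) (entry? σ r p) := by
  simp only [entry?, dppInf, List.getElem?_zipWith_eq_map₂]
  cases π[r]? <;> cases σ[r]? <;> simp [List.getElem?_zipWith_eq_map₂]

theorem entryD_dppInf : entryD (dppInf π σ) = entryD π ⊓ entryD σ := by
  ext r p
  simp only [entryD, entry?_dppInf, Pi.inf_apply]
  cases entry? π r p <;> cases entry? σ r p <;> simp

theorem EntriesPos.dppInf (hπ : EntriesPos π) (hσ : EntriesPos σ) : EntriesPos (dppInf π σ) := by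
  intro r p x hx
  rw [entry?_dppInf, Option.map₂_eq_some_iff] at hx
  obtain ⟨y, z, hy, hz, rfl⟩ := hx
  exact lt_min (hπ r p y hy) (hσ r p z hz)

theorem RowsNonempty.dppInf (hπ : RowsNonempty π) (hσ : RowsNonempty σ) :
    RowsNonempty (dppInf π σ) := by
  intro r hr
  rw [isSome_getElem?_dppInf, Bool.and_eq_true] at hr
  obtain ⟨x, hx⟩ := Option.isSome_iff_exists.1 (hπ r hr.1)
  obtain ⟨y, hy⟩ := Option.isSome_iff_exists.1 (hσ r hr.2)
  rw [entry?_dppInf, hx, hy]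
  rfl

end Inf

section Lattice

variable {d : ℤ} {n : ℕ} {π σ ρ : List (List ℕ)}

theorem IsDPP.dppSup (hπ : IsDPP d n π) (hσ : IsDPP d n σ) : IsDPP d n (dppSup π σ) :=
  isDPP_of_isDPPArray (hπ.rowsNonempty.dppSup hσ.rowsNonempty)
    (hπ.entriesPos.dppSup hσ.entriesPos) (entryD_dppSup ▸ hπ.isDPPArray.sup hσ.isDPPArray)

theorem IsDPP.dppInf (hπ : IsDPP d n π) (hσ : IsDPP d n σ) : IsDPP d n (dppInf π σ) :=
  isDPP_of_isDPPArray (hπ.rowsNonempty.dppInf hσ.rowsNonempty)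
    (hπ.entriesPos.dppInf hσ.entriesPos) (entryD_dppInf ▸ hπ.isDPPArray.inf hσ.isDPPArray)

theorem dppLe_dppSup_left (hπ : EntriesPos π) : dppLe π (dppSup π σ) :=
  (dppLe_iff_entryD_le hπ).2 (entryD_dppSup ▸ le_sup_left)

theorem dppLe_dppSup_right (hσ : EntriesPos σ) : dppLe σ (dppSup π σ) :=
  (dppLe_iff_entryD_le hσ).2 (entryD_dppSup ▸ le_sup_right)

theorem dppSup_dppLe (hπ : EntriesPos π) (hσ : EntriesPos σ) (hπρ : dppLe π ρ)
    (hσρ : dppLe σ ρ) : dppLe (dppSup π σ) ρ :=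
  (dppLe_iff_entryD_le (hπ.dppSup hσ)).2 <| entryD_dppSup ▸
    sup_le ((dppLe_iff_entryD_le hπ).1 hπρ) ((dppLe_iff_entryD_le hσ).1 hσρ)

theorem dppInf_dppLe_left (hπ : EntriesPos π) (hσ : EntriesPos σ) : dppLe (dppInf π σ) π :=
  (dppLe_iff_entryD_le (hπ.dppInf hσ)).2 (entryD_dppInf ▸ inf_le_left)

theorem dppInf_dppLe_right (hπ : EntriesPos π) (hσ : EntriesPos σ) : dppLe (dppInf π σ) σ :=
  (dppLe_iff_entryD_le (hπ.dppInf hσ)).2 (entryD_dppInf ▸ inf_le_right)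

theorem dppLe_dppInf (hρ : EntriesPos ρ) (hρπ : dppLe ρ π) (hρσ : dppLe ρ σ) :
    dppLe ρ (dppInf π σ) :=
  (dppLe_iff_entryD_le hρ).2 <| entryD_dppInf ▸
    le_inf ((dppLe_iff_entryD_le hρ).1 hρπ) ((dppLe_iff_entryD_le hρ).1 hρσ)

end Lattice

theorem stmt5_general (n : ℕ) (π σ : List (List ℕ))
    (hπ : IsDPP 0 n π) (hσ : IsDPP 0 n σ) :
    (∃ μ, IsDPP 0 n μ ∧ dppLe π μ ∧ dppLe σ μ ∧
        ∀ ρ, IsDPP 0 n ρ → dppLe π ρ → dppLe σ ρ → dppLe μ ρ) ∧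
    (∃ ν, IsDPP 0 n ν ∧ dppLe ν π ∧ dppLe ν σ ∧
        ∀ ρ, IsDPP 0 n ρ → dppLe ρ π → dppLe ρ σ → dppLe ρ ν) :=
  ⟨⟨dppSup π σ, hπ.dppSup hσ, dppLe_dppSup_left hπ.entriesPos, dppLe_dppSup_right hσ.entriesPos,
      fun _ _ => dppSup_dppLe hπ.entriesPos hσ.entriesPos⟩,
    ⟨dppInf π σ, hπ.dppInf hσ, dppInf_dppLe_left hπ.entriesPos hσ.entriesPos,
      dppInf_dppLe_right hπ.entriesPos hσ.entriesPos, fun _ hρ => dppLe_dppInf hρ.entriesPos⟩⟩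

/-- `DPP(n)` with the entrywise order is a lattice: any two descending plane partitions
with entries at most `n` have a least upper bound and a greatest lower bound in `DPP(n)`. -/
theorem stmt5 (n : ℕ) (hn : 0 < n) (π σ : List (List ℕ))
    (hπ : IsDPP 0 n π) (hσ : IsDPP 0 n σ) :
    (∃ μ, IsDPP 0 n μ ∧ dppLe π μ ∧ dppLe σ μ ∧
        ∀ ρ, IsDPP 0 n ρ → dppLe π ρ → dppLe σ ρ → dppLe μ ρ) ∧
    (∃ ν, IsDPP 0 n ν ∧ dppLe ν π ∧ dppLe ν σ ∧
        ∀ ρ, IsDPP 0 n ρ → dppLe ρ π → dppLe ρ σ → dppLe ρ ν) :=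
  stmt5_general n π σ hπ hσ
end

section
/- For every integer d \le 1 and every positive integer n, the poset d-DPP(n) of d-descending plane partitions with entries at most n, ordered entrywise, is a lattice: any two such arrays have a least upper bound and a greatest lower bound in d-DPP(n). -/
/-!
Read an array as its entry function `ℕ → ℕ → WithBot ℕ`, a missing entry being `⊥`. The
entrywise order is then the pointwise order, and every clause of the definition of a `d`-DPP
becomes a condition on the entry function that survives pointwise `⊔` and `⊓`: the row and
column conditions are inequalities between monotone expressions in the entries, and the two
conditions on first entries turn into upper and lower bounds on row lengths. So the entrywise
maximum over the union of the two shapes and the entrywise minimum over their intersection are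
again `d`-DPPs with entries at most `n`, and they are the join and the meet.
-/

theorem List.length_zipWithAll {α β γ : Type*} (f : Option α → Option β → γ) :
    ∀ (as : List α) (bs : List β), (List.zipWithAll f as bs).length = max as.length bs.length
  | [], bs => by simp
  | a :: as, [] => by simp
  | a :: as, b :: bs => by
    simp only [List.zipWithAll, List.length_cons, List.length_zipWithAll f as bs]
    omega

namespace DPP

section Rows

variable {α : Type*}

def rowFn (l : List α) (p : ℕ) : WithBot α := l[p]?

@[simp] theorem rowFn_eq_bot_iff {l : List α} {p : ℕ} : rowFn l p = ⊥ ↔ l.length ≤ p :=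
  List.getElem?_eq_none_iff

@[simp] theorem rowFn_eq_coe_iff {l : List α} {p : ℕ} {x : α} :
    rowFn l p = x ↔ l[p]? = some x :=
  Iff.rfl

@[simp] theorem rowFn_nil {p : ℕ} : rowFn ([] : List α) p = ⊥ := rfl

theorem rowFn_of_lt {l : List α} {p : ℕ} (hp : p < l.length) : rowFn l p = l[p] :=
  rowFn_eq_coe_iff.2 (List.getElem?_eq_getElem hp)

theorem forall_mem_iff_rowFn {P : α → Prop} {l : List α} :
    (∀ x ∈ l, P x) ↔ ∀ p (x : α), rowFn l p = x → P x := by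
  simp only [List.mem_iff_getElem?, rowFn_eq_coe_iff]
  grind

theorem isChain_ge_iff_antitone [Preorder α] {l : List α} :
    l.IsChain (fun x y => y ≤ x) ↔ Antitone (rowFn l) := by
  rw [List.isChain_iff_getElem]
  refine ⟨fun h => antitone_nat_of_succ_le fun p => ?_, fun h p hp => ?_⟩
  · by_cases hp : p + 1 < l.length
    · rw [rowFn_of_lt hp, rowFn_of_lt (by omega)]
      exact WithBot.coe_le_coe.2 (h p hp)
    · rw [rowFn_eq_bot_iff.2 (by omega)]
      exact bot_le
  · simpa [rowFn_of_lt hp, rowFn_of_lt (by omega : p < l.length)] using h (Nat.le_succ p)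

theorem isChain_iff_getD {R : α → α → Prop} {l : List α} {z : α} (hR : ∀ a, R a z) :
    l.IsChain R ↔ ∀ r, R (l.getD r z) (l.getD (r + 1) z) := by
  rw [List.isChain_iff_getElem]
  refine ⟨fun h r => ?_, fun h r hr => ?_⟩
  · by_cases hr : r + 1 < l.length
    · rw [List.getD_eq_getElem _ _ hr, List.getD_eq_getElem _ _ (by omega : r < l.length)]
      exact h r hr
    · rw [List.getD_eq_default l z (n := r + 1) (by omega)]
      exact hR _
  · have := h r
    rwa [List.getD_eq_getElem _ _ hr, List.getD_eq_getElem _ _ (by omega : r < l.length)] at this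

theorem forall_mem_iff_forall_getD {P : α → Prop} {l : List α} {z : α} (hP : P z) :
    (∀ x ∈ l, P x) ↔ ∀ r, P (l.getD r z) := by
  refine ⟨fun h r => ?_, fun h x hx => ?_⟩
  · by_cases hr : r < l.length
    · rw [List.getD_eq_getElem _ _ hr]
      exact h _ (List.getElem_mem hr)
    · rw [List.getD_eq_default _ _ (not_lt.1 hr)]
      exact hP
  · obtain ⟨r, hr, rfl⟩ := List.getElem_of_mem hx
    simpa only [List.getD_eq_getElem _ _ hr] using h r

end Rows

section RowConditions

variable {d : ℤ} {a b l : List ℕ}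

theorem length_sub_lt_head_iff :
    (∀ x, l.head? = some x → (l.length : ℤ) - d < x) ↔
      ∀ (q x : ℕ), rowFn l 0 ≤ x → (x : ℤ) + d ≤ q + 1 → rowFn l q = ⊥ := by
  cases l with
  | nil => simp
  | cons y t =>
    rw [rowFn_of_lt (List.length_pos_of_ne_nil (List.cons_ne_nil y t))]
    simp only [List.head?_cons, Option.some.injEq, forall_eq', List.getElem_cons_zero,
      Nat.cast_withBot, WithBot.coe_le_coe, rowFn_eq_bot_iff, List.length_cons]
    constructor
    · intro h q x hyx hxq
      omega
    · intro h
      by_contra! hle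
      have := h t.length y le_rfl (by omega)
      omega

theorem head_le_length_sub_iff :
    (∀ x : ℕ, b.head? = some x → (x : ℤ) ≤ a.length - d) ↔
      ∀ (q x : ℕ), ↑x ≤ rowFn b 0 → (q : ℤ) < x + d → rowFn a q ≠ ⊥ := by
  cases b with
  | nil => simp [Nat.cast_withBot]
  | cons y t =>
    rw [rowFn_of_lt (List.length_pos_of_ne_nil (List.cons_ne_nil y t))]
    simp only [List.head?_cons, Option.some.injEq, forall_eq', List.getElem_cons_zero,
      Nat.cast_withBot, WithBot.coe_le_coe, ne_eq, rowFn_eq_bot_iff, not_le]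
    constructor
    · intro h q x hxy hqx
      omega
    · intro h
      by_contra! hlt
      have := h a.length y le_rfl (by omega)
      omega

theorem rowFn_add_one_le_iff :
    (∀ p, rowFn b p + 1 ≤ rowFn a (p + 1)) ↔
      (b ≠ [] → b.length < a.length) ∧ ∀ p x y, b[p]? = some x → a[p + 1]? = some y → x < y := by
  refine ⟨fun h => ⟨fun hb => ?_, fun p x y hx hy => ?_⟩, fun ⟨hlen, hlt⟩ p => ?_⟩
  · have hp : b.length - 1 < b.length := Nat.sub_lt (List.length_pos_of_ne_nil hb) one_pos
    have := h (b.length - 1)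
    rw [rowFn_of_lt hp] at this
    have hne : rowFn a (b.length - 1 + 1) ≠ ⊥ :=
      ne_bot_of_le_ne_bot (WithBot.coe_ne_bot (a := b[b.length - 1] + 1))
        (by exact_mod_cast this)
    rw [ne_eq, rowFn_eq_bot_iff] at hne
    omega
  · have := h p
    rw [rowFn_eq_coe_iff.2 hx, rowFn_eq_coe_iff.2 hy] at this
    rwa [← WithBot.coe_one, ← WithBot.coe_add, WithBot.coe_le_coe] at this
  · by_cases hp : p < b.length
    · have hp' : p + 1 < a.length :=
        (hlen (List.ne_nil_of_length_pos (by omega))).trans_le' hp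
      rw [rowFn_of_lt hp, rowFn_of_lt hp']
      exact Nat.WithBot.add_one_le_of_lt <| WithBot.coe_lt_coe.2 <|
        hlt p _ _ (List.getElem?_eq_getElem hp) (List.getElem?_eq_getElem hp')
    · rw [rowFn_eq_bot_iff.2 (not_lt.1 hp), WithBot.bot_add]
      exact bot_le

end RowConditions

def entries (π : List (List ℕ)) (r : ℕ) : ℕ → WithBot ℕ := rowFn (π.getD r [])

theorem entries_eq_entry? (π : List (List ℕ)) (r p : ℕ) : entries π r p = entry? π r p := by
  unfold entries entry? rowFn
  rw [List.getD_eq_getElem?_getD]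
  cases π[r]? <;> rfl

theorem dppLe_iff_entries_le {π σ : List (List ℕ)} : dppLe π σ ↔ entries π ≤ entries σ := by
  simp only [Pi.le_def, WithBot.le_iff_forall]
  simp only [entries_eq_entry?]
  rfl

/-- The conditions of `IsDPP d n` in terms of the entry function `e`. Since `⊥ + 1 = ⊥`,
`add_one_le` says both that each row is shorter than the one above and that columns strictly
decrease; `eq_bot_of_head_le` and `ne_bot_of_le_head` encode the two bounds on first entries
as bounds on row lengths. -/
structure IsDPPEntries (d : ℤ) (n : ℕ) (e : ℕ → ℕ → WithBot ℕ) : Prop where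
  pos_le : ∀ r p (x : ℕ), e r p = x → 0 < x ∧ x ≤ n
  antitone : ∀ r, Antitone (e r)
  add_one_le : ∀ r p, e (r + 1) p + 1 ≤ e r (p + 1)
  eq_bot_of_head_le : ∀ r (q x : ℕ), e r 0 ≤ x → (x : ℤ) + d ≤ q + 1 → e r q = ⊥
  ne_bot_of_le_head : ∀ r (q x : ℕ), x ≤ e (r + 1) 0 → (q : ℤ) < x + d → e r q ≠ ⊥

namespace IsDPPEntries

variable {d : ℤ} {n : ℕ} {e e' : ℕ → ℕ → WithBot ℕ}

theorem sup (h : IsDPPEntries d n e) (h' : IsDPPEntries d n e') :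
    IsDPPEntries d n (e ⊔ e') where
  pos_le r p x hx := by
    rcases max_choice (e r p) (e' r p) with hm | hm
    · exact h.pos_le r p x (hm.symm.trans hx)
    · exact h'.pos_le r p x (hm.symm.trans hx)
  antitone r := (h.antitone r).sup (h'.antitone r)
  add_one_le r p := by
    simp only [Pi.sup_apply]
    rw [max_add]
    exact sup_le_sup (h.add_one_le r p) (h'.add_one_le r p)
  eq_bot_of_head_le r q x hx hxq := by
    obtain ⟨h₁, h₂⟩ := sup_le_iff.1 hx
    simp only [Pi.sup_apply, h.eq_bot_of_head_le r q x h₁ hxq,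
      h'.eq_bot_of_head_le r q x h₂ hxq, bot_sup_eq]
  ne_bot_of_le_head r q x hx hxq := by
    rcases le_sup_iff.1 hx with h₁ | h₁
    · exact ne_bot_of_le_ne_bot (h.ne_bot_of_le_head r q x h₁ hxq) le_sup_left
    · exact ne_bot_of_le_ne_bot (h'.ne_bot_of_le_head r q x h₁ hxq) le_sup_right

theorem inf (h : IsDPPEntries d n e) (h' : IsDPPEntries d n e') :
    IsDPPEntries d n (e ⊓ e') where
  pos_le r p x hx := by
    rcases min_choice (e r p) (e' r p) with hm | hm
    · exact h.pos_le r p x (hm.symm.trans hx)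
    · exact h'.pos_le r p x (hm.symm.trans hx)
  antitone r := (h.antitone r).inf (h'.antitone r)
  add_one_le r p := by
    simp only [Pi.inf_apply]
    rw [min_add]
    exact inf_le_inf (h.add_one_le r p) (h'.add_one_le r p)
  eq_bot_of_head_le r q x hx hxq := by
    rcases inf_le_iff.1 hx with h₁ | h₁
    · exact le_bot_iff.1 <| inf_le_left.trans (h.eq_bot_of_head_le r q x h₁ hxq).le
    · exact le_bot_iff.1 <| inf_le_right.trans (h'.eq_bot_of_head_le r q x h₁ hxq).le
  ne_bot_of_le_head r q x hx hxq := by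
    obtain ⟨h₁, h₂⟩ := le_inf_iff.1 hx
    exact min_ne_bot (h.ne_bot_of_le_head r q x h₁ hxq) (h'.ne_bot_of_le_head r q x h₂ hxq)

end IsDPPEntries

section Bridge

variable {d : ℤ} {n : ℕ} {π : List (List ℕ)}

theorem forall_mem_ne_nil_iff :
    (∀ row ∈ π, row ≠ []) ↔ ∀ r < π.length, entries π r 0 ≠ ⊥ := by
  simp only [entries, ne_eq, rowFn_eq_bot_iff, not_le, List.length_pos_iff]
  refine ⟨fun h r hr => ?_, fun h row hrow => ?_⟩
  · rw [List.getD_eq_getElem _ _ hr]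
    exact h _ (List.getElem_mem hr)
  · obtain ⟨r, hr, rfl⟩ := List.getElem_of_mem hrow
    simpa only [List.getD_eq_getElem _ _ hr] using h r hr

theorem forall_mem_forall_mem_iff_entries {P : ℕ → Prop} :
    (∀ row ∈ π, ∀ x ∈ row, P x) ↔ ∀ r p (x : ℕ), entries π r p = x → P x := by
  rw [forall_mem_iff_forall_getD (z := []) (by simp)]
  exact forall_congr' fun r => forall_mem_iff_rowFn

theorem forall_mem_isChain_ge_iff :
    (∀ row ∈ π, row.IsChain (fun x y => y ≤ x)) ↔ ∀ r, Antitone (entries π r) := by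
  rw [forall_mem_iff_forall_getD List.IsChain.nil]
  exact forall_congr' fun r => isChain_ge_iff_antitone

theorem isChain_length_and_col_iff (hne : ∀ row ∈ π, row ≠ []) :
    π.IsChain (fun a b => b.length < a.length) ∧
        π.IsChain (fun a b => ∀ p x y, b[p]? = some x → a[p + 1]? = some y → x < y) ↔
      ∀ r p, entries π (r + 1) p + 1 ≤ entries π r (p + 1) := by
  rw [List.IsChain.iff_of_mem_imp (S := fun a b => b ≠ [] → b.length < a.length)
      fun a b _ hb => ⟨fun h _ => h, fun h => h (hne b hb)⟩,
    isChain_iff_getD (z := []) (by simp), isChain_iff_getD (z := []) (by simp), ← forall_and]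
  exact forall_congr' fun r => rowFn_add_one_le_iff.symm

theorem forall_mem_length_sub_lt_head_iff :
    (∀ row ∈ π, ∀ x, row.head? = some x → (row.length : ℤ) - d < x) ↔
      ∀ r (q x : ℕ), entries π r 0 ≤ x → (x : ℤ) + d ≤ q + 1 → entries π r q = ⊥ := by
  rw [forall_mem_iff_forall_getD (z := []) (by simp)]
  exact forall_congr' fun r => length_sub_lt_head_iff

theorem isChain_head_le_length_sub_iff :
    π.IsChain (fun a b => ∀ x : ℕ, b.head? = some x → (x : ℤ) ≤ a.length - d) ↔
      ∀ r (q x : ℕ), x ≤ entries π (r + 1) 0 → (q : ℤ) < x + d → entries π r q ≠ ⊥ := by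
  rw [isChain_iff_getD (z := []) (by simp)]
  exact forall_congr' fun r => head_le_length_sub_iff

theorem isDPP_iff :
    IsDPP d n π ↔ (∀ r < π.length, entries π r 0 ≠ ⊥) ∧ IsDPPEntries d n (entries π) := by
  unfold IsDPP List.Chain'
  -- the last clause of `IsDPP` elaborates with `x : ℤ` against `b.head?` lifted to `Option ℤ`
  simp only [Option.bind_eq_bind, Option.pure_def, Option.bind_eq_some_iff, Option.some.injEq,
    forall_exists_index, and_imp, forall_apply_eq_imp_iff₂]
  rw [← forall_mem_ne_nil_iff]
  refine ⟨fun ⟨hne, hbd, hlen, hrow, hcol, hlo, hup⟩ => ⟨hne, ?_⟩,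
    fun ⟨hne, hbd, hrow, hcol, hlo, hup⟩ => ?_⟩
  · exact ⟨forall_mem_forall_mem_iff_entries.1 hbd, forall_mem_isChain_ge_iff.1 hrow,
      (isChain_length_and_col_iff hne).1 ⟨hlen, hcol⟩, forall_mem_length_sub_lt_head_iff.1 hlo,
      isChain_head_le_length_sub_iff.1 hup⟩
  · obtain ⟨hlen, hcol⟩ := (isChain_length_and_col_iff hne).2 hcol
    exact ⟨hne, forall_mem_forall_mem_iff_entries.2 hbd, hlen, forall_mem_isChain_ge_iff.2 hrow,
      hcol, forall_mem_length_sub_lt_head_iff.2 hlo, isChain_head_le_length_sub_iff.2 hup⟩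

end Bridge

section Lattice

def rowSup (a b : List ℕ) : List ℕ :=
  List.zipWithAll (fun x y => max (x.getD 0) (y.getD 0)) a b

def dppSup (π σ : List (List ℕ)) : List (List ℕ) :=
  List.zipWithAll (fun a b => rowSup (a.getD []) (b.getD [])) π σ

def dppInf (π σ : List (List ℕ)) : List (List ℕ) :=
  List.zipWith (List.zipWith min) π σ

theorem rowFn_rowSup (a b : List ℕ) : rowFn (rowSup a b) = rowFn a ⊔ rowFn b := by
  funext p
  simp only [rowSup, rowFn, List.getElem?_zipWithAll, Pi.sup_apply]
  cases a[p]? <;> cases b[p]? <;> simp <;> simp [WithBot.none_eq_bot, WithBot.some_eq_coe]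

theorem rowFn_zipWith_min (a b : List ℕ) :
    rowFn (List.zipWith min a b) = rowFn a ⊓ rowFn b := by
  funext p
  simp only [rowFn, List.getElem?_zipWith, Pi.inf_apply]
  cases a[p]? <;> cases b[p]? <;> simp <;> simp [WithBot.none_eq_bot, WithBot.some_eq_coe]

theorem entries_dppSup (π σ : List (List ℕ)) :
    entries (dppSup π σ) = entries π ⊔ entries σ := by
  funext r
  have hrow : (dppSup π σ).getD r [] = rowSup (π.getD r []) (σ.getD r []) := by
    simp only [dppSup, List.getD_eq_getElem?_getD, List.getElem?_zipWithAll]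
    cases π[r]? <;> cases σ[r]? <;> rfl
  rw [Pi.sup_apply, entries, hrow, rowFn_rowSup]
  rfl

theorem entries_dppInf (π σ : List (List ℕ)) :
    entries (dppInf π σ) = entries π ⊓ entries σ := by
  funext r
  have hrow : (dppInf π σ).getD r [] = List.zipWith min (π.getD r []) (σ.getD r []) := by
    simp only [dppInf, List.getD_eq_getElem?_getD, List.getElem?_zipWith]
    cases π[r]? <;> cases σ[r]? <;> simp
  rw [Pi.inf_apply, entries, hrow, rowFn_zipWith_min]
  rfl

variable {d : ℤ} {n : ℕ} {π σ : List (List ℕ)}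

theorem isDPP_dppSup (hπ : IsDPP d n π) (hσ : IsDPP d n σ) : IsDPP d n (dppSup π σ) := by
  obtain ⟨hπne, hπe⟩ := isDPP_iff.1 hπ
  obtain ⟨hσne, hσe⟩ := isDPP_iff.1 hσ
  refine isDPP_iff.2 ⟨fun r hr => ?_, entries_dppSup π σ ▸ hπe.sup hσe⟩
  rw [entries_dppSup]
  rcases lt_max_iff.1 ((List.length_zipWithAll _ π σ).symm ▸ hr) with hr | hr
  · exact ne_bot_of_le_ne_bot (hπne r hr) le_sup_left
  · exact ne_bot_of_le_ne_bot (hσne r hr) le_sup_right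

theorem isDPP_dppInf (hπ : IsDPP d n π) (hσ : IsDPP d n σ) : IsDPP d n (dppInf π σ) := by
  obtain ⟨hπne, hπe⟩ := isDPP_iff.1 hπ
  obtain ⟨hσne, hσe⟩ := isDPP_iff.1 hσ
  refine isDPP_iff.2 ⟨fun r hr => ?_, entries_dppInf π σ ▸ hπe.inf hσe⟩
  rw [dppInf, List.length_zipWith, lt_min_iff] at hr
  rw [entries_dppInf]
  exact min_ne_bot (hπne r hr.1) (hσne r hr.2)

end Lattice

end DPP

theorem stmt12_general (d : ℤ) (n : ℕ) (π σ : List (List ℕ))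
    (hπ : IsDPP d n π) (hσ : IsDPP d n σ) :
    (∃ μ, IsDPP d n μ ∧ dppLe π μ ∧ dppLe σ μ ∧
        ∀ ρ, IsDPP d n ρ → dppLe π ρ → dppLe σ ρ → dppLe μ ρ) ∧
    (∃ ν, IsDPP d n ν ∧ dppLe ν π ∧ dppLe ν σ ∧
        ∀ ρ, IsDPP d n ρ → dppLe ρ π → dppLe ρ σ → dppLe ρ ν) := by
  simp only [DPP.dppLe_iff_entries_le]
  refine ⟨⟨DPP.dppSup π σ, DPP.isDPP_dppSup hπ hσ, ?_⟩,
    ⟨DPP.dppInf π σ, DPP.isDPP_dppInf hπ hσ, ?_⟩⟩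
  · rw [DPP.entries_dppSup]
    exact ⟨le_sup_left, le_sup_right, fun _ _ => sup_le⟩
  · rw [DPP.entries_dppInf]
    exact ⟨inf_le_left, inf_le_right, fun _ _ => le_inf⟩

/-- For every integer `d ≤ 1`, the poset of `d`-descending plane partitions with entries
at most `n`, ordered entrywise, is a lattice. -/
theorem stmt12 (d : ℤ) (hd : d ≤ 1) (n : ℕ) (hn : 0 < n) (π σ : List (List ℕ))
    (hπ : IsDPP d n π) (hσ : IsDPP d n σ) :
    (∃ μ, IsDPP d n μ ∧ dppLe π μ ∧ dppLe σ μ ∧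
        ∀ ρ, IsDPP d n ρ → dppLe π ρ → dppLe σ ρ → dppLe μ ρ) ∧
    (∃ ν, IsDPP d n ν ∧ dppLe ν π ∧ dppLe ν σ ∧
        ∀ ρ, IsDPP d n ρ → dppLe ρ π → dppLe ρ σ → dppLe ρ ν) :=
  stmt12_general d n π σ hπ hσ
end
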